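/- Let T* be a finite rooted tree with nonnegative weights on its nodes, and let 0 < α < β ≤ 1 be constants. If T* contains no (α,β)-balanced node (i.e., no node f with α·w(T*) ≤ w(T*_f) ≤ β·w(T*), where T*_f is the subtree rooted at f and w(T*) is the total weight), then T* contains an (α,β)-critical node, i.e., a node f with w(T*_f) > β·w(T*) such that every child h of f satisfies w(T*_h) < α·w(T*). -/

import Mathlib

/-!
Among the nodes whose subtree is heavier than `β · w(T*)` (the root is one, since it cannot be
balanced), take one whose subtree has the fewest nodes. A child's subtree is strictly smaller, so it
is not that heavy; as it is not balanced either, it is lighter than `α · w(T*)`.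
-/

open scoped Classical in
/-- Subtree weight in a rooted tree given by a parent function. -/
noncomputable def subw {V : Type*} [Fintype V] (parent : V → V) (w : V → ℝ) (f : V) : ℝ :=
  ∑ v ∈ Finset.univ.filter (fun v => ∃ k, parent^[k] v = f), w v

open Function Finset

theorem Function.IsPeriodicPt.eq_of_iterate_eq_isFixedPt {α : Type*} {f : α → α} {x y : α}
    {n m : ℕ} (hx : IsPeriodicPt f n x) (hn : 0 < n) (hy : IsFixedPt f y) (hm : f^[m] x = y) :
    x = y :=
  calc x = f^[n * m] x := (hx.mul_const m).eq.symm
    _ = f^[n * m - m] (f^[m] x) := by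
      rw [← iterate_add_apply, Nat.sub_add_cancel (Nat.le_mul_of_pos_left m hn)]
    _ = y := by rw [hm, (hy.iterate _).eq]

section Subtree

variable {V : Type*} [Fintype V] {parent : V → V}

open scoped Classical in
noncomputable def subtree (parent : V → V) (f : V) : Finset V :=
  univ.filter (fun v => ∃ k, parent^[k] v = f)

theorem mem_subtree {v f : V} : v ∈ subtree parent f ↔ ∃ k, parent^[k] v = f := by
  simp [subtree]

theorem subw_eq_sum_subtree (w : V → ℝ) (f : V) :
    subw parent w f = ∑ v ∈ subtree parent f, w v :=
  rfl

theorem subtree_eq_univ {r : V} (hreach : ∀ v, ∃ k, parent^[k] v = r) :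
    subtree parent r = univ :=
  eq_univ_of_forall fun v => mem_subtree.mpr (hreach v)

theorem subtree_ssubset_of_parent_eq {r f h : V} (hroot : parent r = r)
    (hreach : ∀ v, ∃ k, parent^[k] v = r) (hp : parent h = f) (hne : h ≠ f) :
    subtree parent h ⊂ subtree parent f := by
  refine ssubset_of_subset_not_subset (fun v hv => ?_) (fun hsub => ?_)
  · obtain ⟨k, hk⟩ := mem_subtree.mp hv
    exact mem_subtree.mpr ⟨k + 1, by rw [iterate_succ_apply', hk, hp]⟩
  · obtain ⟨k, hk⟩ := mem_subtree.mp (hsub (mem_subtree.mpr ⟨0, rfl⟩))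
    have hper : IsPeriodicPt parent (k + 1) f := by
      rw [IsPeriodicPt, IsFixedPt, iterate_succ_apply', hk, hp]
    obtain ⟨m, hm⟩ := hreach f
    have hfr : f = r := hper.eq_of_iterate_eq_isFixedPt k.succ_pos hroot hm
    subst hfr
    exact hne (by rw [← hk, iterate_fixed hroot])

end Subtree

theorem stmt0_general {V : Type*} [Fintype V]
    (parent : V → V) (r : V) (hroot : parent r = r)
    (hreach : ∀ v, ∃ k, parent^[k] v = r)
    (w : V → ℝ) (hw : ∀ v, 0 ≤ w v)
    (α β : ℝ) (hαβ : α < β) (hβ : β ≤ 1)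
    (hnobal : ∀ f : V, ¬ (α * (∑ v, w v) ≤ subw parent w f ∧
        subw parent w f ≤ β * (∑ v, w v))) :
    ∃ f : V, subw parent w f > β * (∑ v, w v) ∧
      ∀ h : V, parent h = f → h ≠ f → subw parent w h < α * (∑ v, w v) := by
  set W := ∑ v, w v
  have heavy : ∀ f, α * W ≤ subw parent w f → β * W < subw parent w f := fun f hf =>
    not_le.mp fun hle => hnobal f ⟨hf, hle⟩
  have hroot_heavy : β * W < subw parent w r := by
    refine heavy r ?_
    rw [subw_eq_sum_subtree, subtree_eq_univ hreach]
    exact mul_le_of_le_one_left (sum_nonneg fun v _ => hw v) (hαβ.le.trans hβ)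
  obtain ⟨f, hf, hmin⟩ := exists_min_image (univ.filter (β * W < subw parent w ·))
    (fun f => #(subtree parent f)) ⟨r, by simpa using hroot_heavy⟩
  refine ⟨f, by simpa using hf, fun h hp hne => not_le.mp fun hge => ?_⟩
  have hcard := hmin h (by simpa using heavy h hge)
  exact (card_lt_card (subtree_ssubset_of_parent_eq hroot hreach hp hne)).not_ge hcard

/-- If a finite rooted tree with nonnegative node weights contains no
`(α,β)`-balanced node, then it contains an `(α,β)`-critical node. -/
theorem stmt0 {V : Type*} [Fintype V]
    (parent : V → V) (r : V) (hroot : parent r = r)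
    (hreach : ∀ v, ∃ k, parent^[k] v = r)
    (w : V → ℝ) (hw : ∀ v, 0 ≤ w v)
    (α β : ℝ) (hα : 0 < α) (hαβ : α < β) (hβ : β ≤ 1)
    (hnobal : ∀ f : V, ¬ (α * (∑ v, w v) ≤ subw parent w f ∧
        subw parent w f ≤ β * (∑ v, w v))) :
    ∃ f : V, subw parent w f > β * (∑ v, w v) ∧
      ∀ h : V, parent h = f → h ≠ f → subw parent w h < α * (∑ v, w v) :=
  stmt0_general parent r hroot hreach w hw α β hαβ hβ hnobal
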